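/- arXiv:1802.07456 — 2 statements merged into one kernel-verified Lean document; each statement's English description precedes it below -/
import Mathlib

section
/- Let n ≥ 1 and let a, c be n-times differentiable complex functions with a nonvanishing on an open set. Then the n-th derivative of c/a satisfies the higher-order quotient rule: (c/a)^{(n)} = Σ_{m=0}^{n} binom(n,m) c^{(n−m)} · Σ_{p ∈ 𝒫(m)} [ (−1)^{|p|} m! / (p_1! (1!)^{p_1} ⋯ p_m! (m!)^{p_m}) ] · (|p|! / a^{|p|+1}) · ∏_{i=1}^{m} (a^{(i)})^{p_i}. -/
/-!
Since `c / a = a⁻¹ * c`, the Leibniz rule reduces everything to the derivatives of `a⁻¹` at `x`.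
Put `d j = a^{(j)}(x)`. Applying the Leibniz rule to `a * a⁻¹ = 1` shows that the sequence
`(a⁻¹)^{(m)}(x)` is the inverse of `d` for binomial convolution, and this determines it since
`d 0 ≠ 0`. The partition sum `G m = ∑_{μ ⊢ m} T μ` from the formula is such an inverse: removing a
part `j` from a partition `μ` of `m` turns `T μ` into a multiple of `C(m, j) d j T (μ - j)`, and
summing over the distinct parts of `μ` gives `d 0 G m + ∑_{j ≥ 1} C(m, j) d j G (m - j) = 0`.
Finally, the multiplicity vectors `p` of the statement are exactly the partitions of `m`.
-/

open Complex Finset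

section Partitions

open Nat

open Multiset in
theorem prod_factorial_count_cons (j : ℕ) (ν : Multiset ℕ) :
    ∏ i ∈ (j ::ₘ ν).toFinset, ((j ::ₘ ν).count i)! =
      (j ::ₘ ν).count j * ∏ i ∈ ν.toFinset, (ν.count i)! := by
  have hj : j ∈ (j ::ₘ ν).toFinset := by simp
  have hsub : ν.toFinset ⊆ (j ::ₘ ν).toFinset := fun i hi => by simp_all
  rw [← Finset.mul_prod_erase _ _ hj,
    Finset.prod_congr rfl fun i hi => by rw [count_cons_of_ne (Finset.ne_of_mem_erase hi)],
    count_cons_self, factorial_succ, mul_assoc, Finset.mul_prod_erase _ (fun i => (ν.count i)!) hj,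
    Finset.prod_subset hsub fun i _ hi => by
      rw [count_eq_zero.mpr (by simpa using hi), factorial_zero]]

theorem sum_Icc_sum_partition_sub {M : Type*} [AddCommMonoid M] (m : ℕ)
    (F : ℕ → Multiset ℕ → M) :
    ∑ j ∈ Icc 1 m, ∑ ν : (m - j).Partition, F j ν.parts =
      ∑ μ : m.Partition, ∑ j ∈ μ.parts.toFinset, F j (μ.parts.erase j) := by
  calc ∑ j ∈ Icc 1 m, ∑ ν : (m - j).Partition, F j ν.parts
      = ∑ j ∈ Icc 1 m, ∑ μ ∈ univ.filter (fun μ : m.Partition => j ∈ μ.parts),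
          F j (μ.parts.erase j) := by
        refine Finset.sum_congr rfl fun j hj => ?_
        obtain ⟨h1, h2⟩ := mem_Icc.mp hj
        rw [← (Partition.partitionWithPartEquiv h1 h2).sum_comp]
        simp only [Partition.partitionWithPartEquiv_apply_parts]
        exact (Finset.sum_subtype _ (fun μ => by simp)
          fun μ : m.Partition => F j (μ.parts.erase j)).symm
    _ = _ := by
        refine Finset.sum_comm' fun j μ => ?_
        simp only [mem_Icc, mem_filter, mem_univ, true_and, and_true, Multiset.mem_toFinset]
        exact ⟨And.right, fun h => ⟨⟨μ.parts_pos h, μ.le_of_mem_parts h⟩, h⟩⟩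

end Partitions

section ReciprocalCoeff

open Nat Multiset

variable {K : Type*} [Field K]

theorem eq_of_forall_sum_choose_mul_eq {d u v : ℕ → K} (hd : d 0 ≠ 0) {N : ℕ}
    (h : ∀ m ≤ N, ∑ j ∈ range (m + 1), (m.choose j : K) * d j * u (m - j) =
      ∑ j ∈ range (m + 1), (m.choose j : K) * d j * v (m - j)) :
    ∀ m ≤ N, u m = v m := by
  intro m
  induction m using Nat.strong_induction_on with
  | _ m ih =>
    intro hm
    have hlower : ∑ j ∈ range m, (m.choose (j + 1) : K) * d (j + 1) * u (m - (j + 1)) =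
        ∑ j ∈ range m, (m.choose (j + 1) : K) * d (j + 1) * v (m - (j + 1)) :=
      Finset.sum_congr rfl fun j hj => by rw [ih _ (by grind) (by grind)]
    have hconv := h m hm
    rw [sum_range_succ', sum_range_succ', hlower] at hconv
    simpa [hd] using hconv

/-- The summand of the formula for the partition `μ`, where `μ` has `p i` parts equal to `i` and
`d j` stands for `a^{(j)}(x)`. -/
noncomputable def reciprocalTerm (d : ℕ → K) (μ : Multiset ℕ) : K :=
  ((-1 : K) ^ card μ * (μ.sum ! : K) /
      ((∏ i ∈ μ.toFinset, ((μ.count i)! : K)) * (μ.map fun i => (i ! : K)).prod)) *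
    (((card μ)! : K) / d 0 ^ (card μ + 1)) * (μ.map d).prod

noncomputable def reciprocalCoeff (d : ℕ → K) (m : ℕ) : K :=
  ∑ μ : m.Partition, reciprocalTerm d μ.parts

theorem reciprocalCoeff_zero (d : ℕ → K) : reciprocalCoeff d 0 = (d 0)⁻¹ := by
  simp [reciprocalCoeff, reciprocalTerm]

variable [CharZero K]

theorem card_add_one_mul_reciprocalTerm {d : ℕ → K} (hd : d 0 ≠ 0) (j : ℕ) (ν : Multiset ℕ) :
    (card ν + 1 : K) * ((j + ν.sum).choose j * d j * reciprocalTerm d ν) =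
      -((j ::ₘ ν).count j : K) * d 0 * reciprocalTerm d (j ::ₘ ν) := by
  have hcount := congrArg (Nat.cast : ℕ → K) (prod_factorial_count_cons j ν)
  push_cast at hcount
  have hcnt : ((j ::ₘ ν).count j : K) ≠ 0 := by
    rw [count_cons_self]
    exact Nat.cast_ne_zero.mpr (Nat.succ_ne_zero _)
  have hfact (k : ℕ) : (k ! : K) ≠ 0 := Nat.cast_ne_zero.mpr k.factorial_ne_zero
  have hprod : (ν.map fun i => (i ! : K)).prod ≠ 0 := by
    simp [Multiset.prod_eq_zero_iff, Nat.factorial_ne_zero]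
  have hcprod : ∏ i ∈ ν.toFinset, ((ν.count i)! : K) ≠ 0 := by
    simp [Finset.prod_eq_zero_iff, Nat.factorial_ne_zero]
  rw [reciprocalTerm, reciprocalTerm, hcount, Nat.cast_choose K (Nat.le_add_right j _),
    Nat.add_sub_cancel_left]
  simp only [Multiset.card_cons, Multiset.sum_cons, Multiset.map_cons, Multiset.prod_cons,
    factorial_succ]
  push_cast
  field_simp [hfact]
  ring

theorem sum_choose_mul_reciprocalTerm_erase {d : ℕ → K} (hd : d 0 ≠ 0) {μ : Multiset ℕ}
    (hμ : μ ≠ 0) :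
    ∑ j ∈ μ.toFinset, (μ.sum.choose j : K) * d j * reciprocalTerm d (μ.erase j) =
      -d 0 * reciprocalTerm d μ := by
  have hcard : (card μ : K) ≠ 0 := by simpa using hμ
  refine mul_left_cancel₀ hcard ?_
  calc (card μ : K) * ∑ j ∈ μ.toFinset, (μ.sum.choose j : K) * d j * reciprocalTerm d (μ.erase j)
      = ∑ j ∈ μ.toFinset, -(μ.count j : K) * d 0 * reciprocalTerm d μ := by
        rw [Finset.mul_sum]
        refine Finset.sum_congr rfl fun j hj => ?_
        obtain ⟨ν, rfl⟩ := exists_cons_of_mem (mem_toFinset.mp hj)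
        rw [erase_cons_head, ← card_add_one_mul_reciprocalTerm hd, Multiset.card_cons,
          Multiset.sum_cons]
        push_cast
        rfl
    _ = (card μ : K) * (-d 0 * reciprocalTerm d μ) := by
        rw [← toFinset_sum_count_eq, Nat.cast_sum, Finset.sum_mul]
        exact Finset.sum_congr rfl fun j _ => by ring

theorem sum_choose_mul_reciprocalCoeff {d : ℕ → K} (hd : d 0 ≠ 0) (m : ℕ) :
    ∑ j ∈ range (m + 1), (m.choose j : K) * d j * reciprocalCoeff d (m - j) =
      if m = 0 then 1 else 0 := by
  rcases m with _ | m
  · simp [reciprocalCoeff_zero, hd]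
  have herase (μ : (m + 1).Partition) :
      ∑ j ∈ μ.parts.toFinset, ((m + 1).choose j : K) * d j * reciprocalTerm d (μ.parts.erase j) =
        -d 0 * reciprocalTerm d μ.parts := by
    have hμ : μ.parts ≠ 0 := fun h => by simpa [h] using μ.parts_sum
    simpa [μ.parts_sum] using sum_choose_mul_reciprocalTerm_erase hd hμ
  rw [sum_range_succ', range_eq_Ico, Finset.sum_Ico_add'
      (fun j => ((m + 1).choose j : K) * d j * reciprocalCoeff d (m + 1 - j)),
    zero_add, Finset.Ico_add_one_right_eq_Icc]
  simp only [reciprocalCoeff, Finset.mul_sum]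
  rw [sum_Icc_sum_partition_sub (m + 1)
      fun j ν => ((m + 1).choose j : K) * d j * reciprocalTerm d ν,
    Finset.sum_congr rfl fun μ _ => herase μ]
  simp [← Finset.mul_sum]

end ReciprocalCoeff

theorem iteratedDeriv_inv_eq_reciprocalCoeff {𝕜 : Type*} [NontriviallyNormedField 𝕜]
    [CharZero 𝕜] {f : 𝕜 → 𝕜} {x : 𝕜} {n : ℕ} (hf : ContDiffAt 𝕜 n f x) (hx : f x ≠ 0)
    {m : ℕ} (hm : m ≤ n) :
    iteratedDeriv m (fun y => (f y)⁻¹) x = reciprocalCoeff (fun j => iteratedDeriv j f x) m := by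
  set d := fun j => iteratedDeriv j f x
  have hd : d 0 ≠ 0 := by simpa [d] using hx
  refine eq_of_forall_sum_choose_mul_eq (u := fun k => iteratedDeriv k (fun y => (f y)⁻¹) x)
    (v := reciprocalCoeff d) hd (fun k hk => ?_) m hm
  have hkn : (k : WithTop ℕ∞) ≤ n := by exact_mod_cast hk
  have hinv : ContDiffAt 𝕜 k (fun y => (f y)⁻¹) x := (hf.inv hx).of_le hkn
  have hone : (fun y => f y * (f y)⁻¹) =ᶠ[nhds x] fun _ => 1 :=
    (hf.continuousAt.eventually_ne hx).mono fun y hy => mul_inv_cancel₀ hy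
  rw [sum_choose_mul_reciprocalCoeff hd, ← iteratedDeriv_fun_mul (hf.of_le hkn) hinv,
    hone.iteratedDeriv_eq, iteratedDeriv_const]

section Multiplicities

open Nat Multiset

variable {m : ℕ}

def partsOfMultiplicities (p : Fin m → ℕ) : Multiset ℕ :=
  ∑ i, replicate (p i) (i + 1)

theorem exists_eq_of_mem_partsOfMultiplicities {p : Fin m → ℕ} {j : ℕ}
    (hj : j ∈ partsOfMultiplicities p) : ∃ i : Fin m, j = i + 1 := by
  obtain ⟨i, -, hi⟩ := mem_sum.mp hj
  exact ⟨i, eq_of_mem_replicate hi⟩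

theorem count_partsOfMultiplicities (p : Fin m → ℕ) (i : Fin m) :
    (partsOfMultiplicities p).count ((i : ℕ) + 1) = p i := by
  rw [partsOfMultiplicities, count_sum', Finset.sum_eq_single i (fun k _ hk => ?_) (by simp),
    count_replicate_self]
  rw [count_replicate, if_neg (by grind)]

theorem card_partsOfMultiplicities (p : Fin m → ℕ) :
    card (partsOfMultiplicities p) = ∑ i, p i := by
  simp [partsOfMultiplicities]

theorem sum_partsOfMultiplicities (p : Fin m → ℕ) :
    (partsOfMultiplicities p).sum = ∑ i : Fin m, (i + 1) * p i := by
  simp [partsOfMultiplicities, Multiset.sum_sum, mul_comm]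

theorem prod_map_partsOfMultiplicities {M : Type*} [CommMonoid M] (g : ℕ → M) (p : Fin m → ℕ) :
    ((partsOfMultiplicities p).map g).prod = ∏ i : Fin m, g (i + 1) ^ p i := by
  rw [partsOfMultiplicities, ← coe_mapAddMonoidHom, map_sum, Multiset.prod_sum]
  simp

theorem prod_count_partsOfMultiplicities {M : Type*} [CommMonoid M] (g : ℕ → M) (hg : g 0 = 1)
    (p : Fin m → ℕ) :
    ∏ j ∈ (partsOfMultiplicities p).toFinset, g ((partsOfMultiplicities p).count j) =
      ∏ i : Fin m, g (p i) := by
  have hsub : (partsOfMultiplicities p).toFinset ⊆ univ.image fun i : Fin m => (i : ℕ) + 1 :=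
    fun j hj => by
      obtain ⟨i, rfl⟩ := exists_eq_of_mem_partsOfMultiplicities (mem_toFinset.mp hj)
      exact mem_image_of_mem _ (mem_univ i)
  rw [Finset.prod_subset hsub fun j _ hj => by rw [count_eq_zero.mpr (by simpa using hj), hg],
    Finset.prod_image fun i _ k _ h => Fin.ext (by simpa using h)]
  simp only [count_partsOfMultiplicities]

theorem partsOfMultiplicities_count (μ : m.Partition) :
    partsOfMultiplicities (fun i : Fin m => μ.parts.count ((i : ℕ) + 1)) = μ.parts := by
  ext j
  by_cases h : ∃ i : Fin m, j = i + 1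
  · obtain ⟨i, rfl⟩ := h
    rw [count_partsOfMultiplicities]
  · push Not at h
    have hnot : j ∉ μ.parts := fun hj =>
      h ⟨j - 1, by grind [μ.parts_pos hj, μ.le_of_mem_parts hj]⟩ (by grind [μ.parts_pos hj])
    rw [count_eq_zero.mpr hnot, count_eq_zero.mpr fun hj => ?_]
    obtain ⟨i, rfl⟩ := exists_eq_of_mem_partsOfMultiplicities hj
    exact h i rfl

theorem sum_multiplicities_eq_sum_partition {M : Type*} [AddCommMonoid M]
    (F : Multiset ℕ → M) :
    ∑ p ∈ univ.filter (fun p : Fin m → Fin (m + 1) => ∑ i, (i.1 + 1) * (p i).1 = m),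
      F (partsOfMultiplicities fun i => p i) = ∑ μ : m.Partition, F μ.parts := by
  refine sum_bij' (fun p hp => ⟨partsOfMultiplicities fun i => p i, fun hj => ?_, ?_⟩)
    (fun μ _ i => ⟨μ.parts.count ((i : ℕ) + 1), ?_⟩) (fun _ _ => mem_univ _) (fun μ _ => ?_)
    (fun p _ => ?_) (fun μ _ => ?_) (fun _ _ => rfl)
  · obtain ⟨i, rfl⟩ := exists_eq_of_mem_partsOfMultiplicities hj
    exact Nat.succ_pos _
  · simpa [sum_partsOfMultiplicities] using hp
  · have hcard := Multiset.card_nsmul_le_sum (a := 1) fun x hx => μ.parts_pos hx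
    have hcount := count_le_card ((i : ℕ) + 1) μ.parts
    simp only [smul_eq_mul, mul_one, μ.parts_sum] at hcard
    omega
  · simpa [← sum_partsOfMultiplicities, partsOfMultiplicities_count] using μ.parts_sum
  · funext i
    exact Fin.ext (count_partsOfMultiplicities _ i)
  · exact Nat.Partition.ext (partsOfMultiplicities_count μ)

theorem reciprocalTerm_partsOfMultiplicities {K : Type*} [Field K] (d : ℕ → K)
    (p : Fin m → ℕ) (hp : ∑ i : Fin m, (i + 1) * p i = m) :
    reciprocalTerm d (partsOfMultiplicities p) =
      ((-1 : K) ^ (∑ i, p i) * (m ! : K) /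
          (∏ i : Fin m, (((p i)! : K) * (((i : ℕ) + 1)! : K) ^ p i))) *
        (((∑ i, p i)! : K) / d 0 ^ ((∑ i, p i) + 1)) * ∏ i : Fin m, d (i + 1) ^ p i := by
  rw [reciprocalTerm, card_partsOfMultiplicities, sum_partsOfMultiplicities, hp,
    prod_count_partsOfMultiplicities (fun k => (k ! : K)) (by simp),
    prod_map_partsOfMultiplicities, prod_map_partsOfMultiplicities, Finset.prod_mul_distrib]

end Multiplicities

theorem higher_order_quotient_rule_general
    (n : ℕ) (a c : ℂ → ℂ) (s : Set ℂ)
    (ha : ContDiff ℂ n a) (hc : ContDiff ℂ n c)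
    (hane : ∀ y ∈ s, a y ≠ 0) (x : ℂ) (hx : x ∈ s) :
    iteratedDeriv n (fun y => c y / a y) x =
      ∑ m ∈ Finset.range (n + 1),
        (n.choose m : ℂ) * iteratedDeriv (n - m) c x *
          ∑ p ∈ Finset.univ.filter
              (fun p : Fin m → Fin (m + 1) => ∑ i, (i.1 + 1) * (p i).1 = m),
            ((-1 : ℂ) ^ (∑ i, (p i).1) * (m.factorial : ℂ) /
                (∏ i : Fin m, (((p i).1.factorial : ℂ) * ((i.1 + 1).factorial : ℂ) ^ (p i).1))) *
              (((∑ i, (p i).1).factorial : ℂ) / a x ^ ((∑ i, (p i).1) + 1)) *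
              ∏ i : Fin m, (iteratedDeriv (i.1 + 1) a x) ^ (p i).1 := by
  have hax := hane x hx
  have hquot : (fun y => c y / a y) = fun y => (a y)⁻¹ * c y :=
    funext fun y => div_eq_inv_mul _ _
  have hinv : ContDiffAt ℂ n (fun y => (a y)⁻¹) x := ha.contDiffAt.inv hax
  rw [hquot, iteratedDeriv_fun_mul hinv hc.contDiffAt]
  refine Finset.sum_congr rfl fun m hm => ?_
  rw [iteratedDeriv_inv_eq_reciprocalCoeff ha.contDiffAt hax (by grind), reciprocalCoeff,
    ← sum_multiplicities_eq_sum_partition,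
    Finset.sum_congr rfl fun p hp => reciprocalTerm_partsOfMultiplicities _ _ (mem_filter.mp hp).2]
  simp only [iteratedDeriv_zero]
  ring

/-- Higher-order quotient rule. For `n ≥ 1` and `a, c` n-times
(continuously) differentiable with `a` nonvanishing on an open set `s`, at any `x ∈ s`:
`(c/a)^{(n)}(x) = Σ_{m=0}^{n} C(n,m) c^{(n−m)}(x) ·
  Σ_{p ∈ 𝒫(m)} [(−1)^{|p|} m! / (p₁!(1!)^{p₁}⋯p_m!(m!)^{p_m})] · (|p|!/a(x)^{|p|+1}) ·
  ∏_{i=1}^m (a^{(i)}(x))^{p_i}`,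
where `𝒫(m)` is the set of `p = (p₁,…,p_m)` with `Σ i·p_i = m`. -/
theorem higher_order_quotient_rule
    (n : ℕ) (hn : 1 ≤ n) (a c : ℂ → ℂ) (s : Set ℂ) (hs : IsOpen s)
    (ha : ContDiff ℂ n a) (hc : ContDiff ℂ n c)
    (hane : ∀ y ∈ s, a y ≠ 0) (x : ℂ) (hx : x ∈ s) :
    iteratedDeriv n (fun y => c y / a y) x =
      ∑ m ∈ Finset.range (n + 1),
        (n.choose m : ℂ) * iteratedDeriv (n - m) c x *
          ∑ p ∈ Finset.univ.filter
              (fun p : Fin m → Fin (m + 1) => ∑ i, (i.1 + 1) * (p i).1 = m),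
            ((-1 : ℂ) ^ (∑ i, (p i).1) * (m.factorial : ℂ) /
                (∏ i : Fin m, (((p i).1.factorial : ℂ) * ((i.1 + 1).factorial : ℂ) ^ (p i).1))) *
              (((∑ i, (p i).1).factorial : ℂ) / a x ^ ((∑ i, (p i).1) + 1)) *
              ∏ i : Fin m, (iteratedDeriv (i.1 + 1) a x) ^ (p i).1 :=
  higher_order_quotient_rule_general n a c s ha hc hane x hx
end

section
/- Under a time shift q'(t) = q(t−t_0), the GNFT norming constants transform as Q'_{k,ℓ} = e^{−2jλ_k t_0} · Σ_{u=0}^{L_k−ℓ−1} (−2t_0)^u/u! · Q_{k,ℓ+u}. Equivalently, given that the shifted spectral functions satisfy a'(λ) = a(λ)e^{jλ t_0} and b'(λ) = b(λ)e^{−jλ t_0}, and that Q_{k,ℓ} = (j^ℓ/(L_k−ℓ−1)!) lim_{λ→λ_k} d^{L_k−ℓ−1}/dλ^{L_k−ℓ−1}[(λ−λ_k)^{L_k} b(λ)/a(λ)] (and similarly for the primed quantities), the stated sum formula holds. -/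
/-!
Near `λₖ` write `a(λ) = (λ - λₖ)^L h(λ)` with `h` analytic and `h(λₖ) ≠ 0`. Off `λₖ` the
function `(λ - λₖ)^L b/a` then agrees with the analytic `F = b/h`, so every norming constant is,
up to a factor `jˡ`, a Taylor coefficient of `F` at `λₖ`, and the shifted ones are those of
`F(λ) e^{-2jt₀λ}`. The Leibniz rule for this product gives the binomial sum.
-/

open Complex Filter Finset Topology

section IteratedDeriv

variable {𝕜 E : Type*} [NontriviallyNormedField 𝕜] [NormedAddCommGroup E] [NormedSpace 𝕜 E]

theorem Filter.EventuallyEq.iteratedDeriv_nhdsNE {f g : 𝕜 → E} {x : 𝕜} (hfg : f =ᶠ[𝓝[≠] x] g)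
    (n : ℕ) : iteratedDeriv n f =ᶠ[𝓝[≠] x] iteratedDeriv n g := by
  filter_upwards [eventually_eventually_nhdsWithin.2 hfg, self_mem_nhdsWithin] with y hy hyx
  rw [isOpen_compl_singleton.nhdsWithin_eq hyx] at hy
  exact Filter.EventuallyEq.iteratedDeriv_eq n hy

theorem AnalyticAt.tendsto_iteratedDeriv_nhdsNE [CompleteSpace E] {f g : 𝕜 → E} {x : 𝕜}
    (hg : AnalyticAt 𝕜 g x) (hfg : f =ᶠ[𝓝[≠] x] g) (n : ℕ) :
    Tendsto (iteratedDeriv n f) (𝓝[≠] x) (𝓝 (iteratedDeriv n g x)) := by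
  have hcont : ContinuousAt (iteratedDeriv n g) x := by
    rw [iteratedDeriv_eq_iterate]
    exact (hg.iterated_deriv n).continuousAt
  exact hcont.continuousWithinAt.tendsto.congr' (hfg.iteratedDeriv_nhdsNE n).symm

theorem AnalyticAt.exists_eventuallyEq_pow_smul_of_iteratedDeriv [CharZero 𝕜] [CompleteSpace E]
    {f : 𝕜 → E} {x : 𝕜} {n : ℕ} (hf : AnalyticAt 𝕜 f x)
    (hzero : ∀ m < n, iteratedDeriv m f x = 0) (hn : iteratedDeriv n f x ≠ 0) :
    ∃ g : 𝕜 → E, AnalyticAt 𝕜 g x ∧ g x ≠ 0 ∧ ∀ᶠ z in 𝓝 x, f z = (z - x) ^ n • g z := by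
  refine hf.analyticOrderAt_eq_natCast.1 (le_antisymm ?_
    ((natCast_le_analyticOrderAt_iff_iteratedDeriv_eq_zero hf).2 hzero))
  refine Order.le_of_lt_add_one (lt_of_not_ge fun h => hn ?_)
  exact (natCast_le_analyticOrderAt_iff_iteratedDeriv_eq_zero (n := n + 1) hf).1
    (by exact_mod_cast h) n n.lt_succ_self

theorem AnalyticAt.eq_mul_iteratedDeriv_of_tendsto [CompleteSpace 𝕜] {f g : 𝕜 → 𝕜} {x c q : 𝕜}
    (hg : AnalyticAt 𝕜 g x) (hfg : f =ᶠ[𝓝[≠] x] g) {n : ℕ}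
    (h : Tendsto (fun y => c * iteratedDeriv n f y) (𝓝[≠] x) (𝓝 q)) :
    q = c * iteratedDeriv n g x :=
  tendsto_nhds_unique h ((hg.tendsto_iteratedDeriv_nhdsNE hfg n).const_mul c)

theorem pow_mul_div_eventuallyEq_nhdsNE {a h b : 𝕜 → 𝕜} {x : 𝕜} {n : ℕ}
    (ha : ∀ᶠ z in 𝓝 x, a z = (z - x) ^ n * h z) :
    (fun z => (z - x) ^ n * b z / a z) =ᶠ[𝓝[≠] x] fun z => b z / h z := by
  filter_upwards [nhdsWithin_le_nhds ha, self_mem_nhdsWithin] with z hz hzx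
  rw [hz, mul_div_mul_left _ _ (pow_ne_zero n (sub_ne_zero.2 hzx))]

end IteratedDeriv

theorem iteratedDeriv_mul_cexp_const_mul {f : ℂ → ℂ} {x : ℂ} {n : ℕ} (hf : ContDiffAt ℂ n f x)
    (c : ℂ) :
    iteratedDeriv n (fun z => f z * exp (c * z)) x =
      exp (c * x) * ∑ u ∈ range (n + 1), (n.choose u : ℂ) * c ^ u * iteratedDeriv (n - u) f x := by
  have hexp : ContDiffAt ℂ n (fun z => exp (c * z)) x := by fun_prop
  simp_rw [mul_comm (f _)]
  rw [iteratedDeriv_fun_mul hexp hf, Finset.mul_sum]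
  simp only [iteratedDeriv_cexp_const_mul]
  exact Finset.sum_congr rfl fun u _ => by ring

theorem mul_cexp_neg_div_mul_cexp (x y s : ℂ) :
    x * exp (-s) / (y * exp s) = x / y * exp (-2 * s) := by
  rw [mul_div_mul_comm, ← exp_sub]
  ring_nf

theorem gnft_time_shift_norming_constants_general
    (lk : ℂ) (t0 : ℝ) (L : ℕ) (a b : ℂ → ℂ) (Q Q' : ℕ → ℂ)
    (ha : AnalyticAt ℂ a lk) (hb : AnalyticAt ℂ b lk)
    (hzero : ∀ m < L, iteratedDeriv m a lk = 0)
    (hLder : iteratedDeriv L a lk ≠ 0)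
    (hQ : ∀ ℓ < L,
      Tendsto (fun lam => (I ^ ℓ / ((L - ℓ - 1).factorial : ℂ)) *
          iteratedDeriv (L - ℓ - 1) (fun μ => (μ - lk) ^ L * b μ / a μ) lam)
        (nhdsWithin lk {lk}ᶜ) (nhds (Q ℓ)))
    (hQ' : ∀ ℓ < L,
      Tendsto (fun lam => (I ^ ℓ / ((L - ℓ - 1).factorial : ℂ)) *
          iteratedDeriv (L - ℓ - 1)
            (fun μ => (μ - lk) ^ L * (b μ * Complex.exp (-I * μ * t0)) /
              (a μ * Complex.exp (I * μ * t0))) lam)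
        (nhdsWithin lk {lk}ᶜ) (nhds (Q' ℓ))) :
    ∀ ℓ < L,
      Q' ℓ = Complex.exp (-2 * I * lk * t0) *
        ∑ u ∈ Finset.range (L - ℓ), (-2 * (t0 : ℂ)) ^ u / (u.factorial : ℂ) * Q (ℓ + u) := by
  obtain ⟨h, hh, hh0, hah⟩ := ha.exists_eventuallyEq_pow_smul_of_iteratedDeriv hzero hLder
  have hF : AnalyticAt ℂ (fun z => b z / h z) lk := hb.div hh hh0
  have hF' : AnalyticAt ℂ (fun z => b z / h z * exp (-2 * I * t0 * z)) lk := by fun_prop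
  have hquot := pow_mul_div_eventuallyEq_nhdsNE (b := b) hah
  have hquot' : (fun μ => (μ - lk) ^ L * (b μ * exp (-I * μ * t0)) / (a μ * exp (I * μ * t0)))
      =ᶠ[𝓝[≠] lk] fun z => b z / h z * exp (-2 * I * t0 * z) := by
    filter_upwards [hquot] with μ hμ
    rw [← mul_assoc, show -I * μ * t0 = -(I * μ * t0) by ring, mul_cexp_neg_div_mul_cexp, hμ]
    ring_nf
  intro ℓ hℓ
  obtain ⟨n, hn⟩ : ∃ n, L - ℓ = n + 1 := ⟨L - ℓ - 1, by omega⟩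
  rw [hF'.eq_mul_iteratedDeriv_of_tendsto hquot' (hQ' ℓ hℓ), show L - ℓ - 1 = n by omega,
    iteratedDeriv_mul_cexp_const_mul hF.contDiffAt, hn, mul_left_comm,
    show -2 * I * (t0 : ℂ) * lk = -2 * I * lk * t0 by ring, Finset.mul_sum]
  congr 1
  refine Finset.sum_congr rfl fun u hu => ?_
  have hun : u ≤ n := Nat.lt_succ_iff.1 (Finset.mem_range.1 hu)
  rw [hF.eq_mul_iteratedDeriv_of_tendsto hquot (hQ (ℓ + u) (by omega)),
    show L - (ℓ + u) - 1 = n - u by omega, Nat.cast_choose ℂ hun]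
  have hfact : (n.factorial : ℂ) ≠ 0 := Nat.cast_ne_zero.2 n.factorial_ne_zero
  field_simp
  ring

/-- GNFT time-shift property for norming constants. With
`a'(λ) = a(λ)e^{jλt₀}`, `b'(λ) = b(λ)e^{−jλt₀}` and norming constants defined by
`Q_{k,ℓ} = (jˡ/(L−ℓ−1)!)·lim_{λ→λk} d^{L−ℓ−1}/dλ^{L−ℓ−1}[(λ−λk)^L b(λ)/a(λ)]`
(and analogously for the primed quantities), one has
`Q'_{k,ℓ} = e^{−2jλk t₀} Σ_{u=0}^{L−ℓ−1} (−2t₀)^u/u! · Q_{k,ℓ+u}`. -/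
theorem gnft_time_shift_norming_constants
    (lk : ℂ) (t0 : ℝ) (L : ℕ) (hL : 1 ≤ L) (a b : ℂ → ℂ) (Q Q' : ℕ → ℂ)
    (ha : AnalyticAt ℂ a lk) (hb : AnalyticAt ℂ b lk)
    (hzero : ∀ m < L, iteratedDeriv m a lk = 0)
    (hLder : iteratedDeriv L a lk ≠ 0)
    (hbne : b lk ≠ 0)
    (hQ : ∀ ℓ < L,
      Tendsto (fun lam => (I ^ ℓ / ((L - ℓ - 1).factorial : ℂ)) *
          iteratedDeriv (L - ℓ - 1) (fun μ => (μ - lk) ^ L * b μ / a μ) lam)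
        (nhdsWithin lk {lk}ᶜ) (nhds (Q ℓ)))
    (hQ' : ∀ ℓ < L,
      Tendsto (fun lam => (I ^ ℓ / ((L - ℓ - 1).factorial : ℂ)) *
          iteratedDeriv (L - ℓ - 1)
            (fun μ => (μ - lk) ^ L * (b μ * Complex.exp (-I * μ * t0)) /
              (a μ * Complex.exp (I * μ * t0))) lam)
        (nhdsWithin lk {lk}ᶜ) (nhds (Q' ℓ))) :
    ∀ ℓ < L,
      Q' ℓ = Complex.exp (-2 * I * lk * t0) *
        ∑ u ∈ Finset.range (L - ℓ), (-2 * (t0 : ℂ)) ^ u / (u.factorial : ℂ) * Q (ℓ + u) :=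
  gnft_time_shift_norming_constants_general lk t0 L a b Q Q' ha hb hzero hLder hQ hQ'
end
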